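/- arXiv:2406.06429 — 2 statements merged into one kernel-verified Lean document; each statement's English description precedes it below -/
import Mathlib

section
/- Let F : 𝔽₂ⁿ → 𝔽₂^m be a vectorial Boolean function. Then Σ_{λ ∈ 𝔽₂^m} 𝔉(F_λ)² ≥ 2^{n+m}, and equality holds if and only if m ≥ n and F is an embedding (i.e., injective). -/
/-!
Expanding each square, `𝔉(F_λ)² = Σ_{x,y} (-1)^{λ · (F x + F y)}`, and summing over `λ` first, the
orthogonality of the characters `λ ↦ (-1)^{λ · v}` of `𝔽₂^m` leaves
`Σ_λ 𝔉(F_λ)² = 2^m · #{(x, y) | F x = F y}`. The collision pairs contain the `2^n` diagonal pairs,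
with equality exactly when `F` is injective, and injectivity forces `2^n ≤ 2^m`.
-/

/-- The vector space 𝔽₂ⁿ. -/
abbrev BV (n : ℕ) := Fin n → ZMod 2

/-- First-order derivative of a Boolean function: `D_a f (x) = f (x + a) + f x`. -/
def bderiv {n : ℕ} (f : BV n → ZMod 2) (a : BV n) : BV n → ZMod 2 :=
  fun x => f (x + a) + f x

/-- Weight of a Boolean function: the number of inputs mapped to 1. -/
noncomputable def bwt {n : ℕ} (f : BV n → ZMod 2) : ℕ := {x | f x = 1}.ncard

/-- `𝔉(f) = Σ_x (-1)^(f x)`. -/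
def fou {n : ℕ} (f : BV n → ZMod 2) : ℤ := ∑ x : BV n, (-1 : ℤ) ^ (f x).val

/-- Component function `F_λ(x) = λ · F(x)` (dot product over 𝔽₂). -/
def cmpnt {n m : ℕ} (F : BV n → BV m) (l : BV m) : BV n → ZMod 2 :=
  fun x => ∑ i, l i * F x i

/-- A Boolean function on n variables is balanced if its weight is `2^(n-1)`. -/
def IsBalanced {n : ℕ} (f : BV n → ZMod 2) : Prop := bwt f = 2 ^ (n - 1)

open Finset Matrix

lemma AddChar.map_sum_eq_prod {A M ι : Type*} [AddCommMonoid A] [CommMonoid M] (ψ : AddChar A M)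
    (s : Finset ι) (f : ι → A) : ψ (∑ i ∈ s, f i) = ∏ i ∈ s, ψ (f i) := by
  simpa [← ofAdd_sum] using map_prod ψ.toMonoidHom (fun i => Multiplicative.ofAdd (f i)) s

def signChar : AddChar (ZMod 2) ℤ where
  toFun a := (-1) ^ a.val
  map_zero_eq_one' := rfl
  map_add_eq_mul' := by decide

@[simp]
lemma signChar_apply (a : ZMod 2) : signChar a = (-1) ^ a.val := rfl

lemma sum_signChar_mul (b : ZMod 2) : ∑ a, signChar (a * b) = if b = 0 then 2 else 0 := by
  revert b; decide

lemma sum_signChar_dotProduct {ι : Type*} [Fintype ι] [DecidableEq ι] (v : ι → ZMod 2) :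
    ∑ l : ι → ZMod 2, signChar (l ⬝ᵥ v) = if v = 0 then 2 ^ Fintype.card ι else 0 := by
  calc ∑ l : ι → ZMod 2, signChar (l ⬝ᵥ v)
      = ∑ l : ι → ZMod 2, ∏ i, signChar (l i * v i) := by
        simp only [dotProduct, AddChar.map_sum_eq_prod]
    _ = ∏ i, ∑ a, signChar (a * v i) := (Fintype.prod_sum (fun i a => signChar (a * v i))).symm
    _ = if v = 0 then 2 ^ Fintype.card ι else 0 := by
        simp only [sum_signChar_mul, Finset.prod_ite_zero, funext_iff]
        simp

section Collisions

variable {α β : Type*} [Fintype α] [DecidableEq β]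

def collisions (f : α → β) : Finset (α × α) := {p | f p.1 = f p.2}

lemma diag_subset_collisions [DecidableEq α] (f : α → β) : univ.diag ⊆ collisions f := by
  intro p
  simp +contextual [collisions, mem_diag]

lemma card_le_card_collisions [DecidableEq α] (f : α → β) : Fintype.card α ≤ #(collisions f) := by
  simpa using card_le_card (diag_subset_collisions f)

lemma collisions_eq_diag_iff_injective [DecidableEq α] (f : α → β) :
    collisions f = univ.diag ↔ Function.Injective f := by
  simp only [Finset.ext_iff, collisions, mem_filter, mem_univ, true_and, mem_diag, Prod.forall]
  exact ⟨fun h x y => (h x y).1, fun h x y => ⟨@h x y, congrArg f⟩⟩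

lemma card_collisions_eq_iff_injective [DecidableEq α] (f : α → β) :
    #(collisions f) = Fintype.card α ↔ Function.Injective f := by
  rw [← collisions_eq_diag_iff_injective, ← eq_iff_card_ge_of_superset (diag_subset_collisions f),
    diag_card, card_univ, (card_le_card_collisions f).ge_iff_eq']

end Collisions

lemma sq_fou_cmpnt {n m : ℕ} (F : BV n → BV m) (l : BV m) :
    fou (cmpnt F l) ^ 2 = ∑ x, ∑ y, signChar (l ⬝ᵥ (F x + F y)) := by
  change (∑ x, signChar (l ⬝ᵥ F x)) ^ 2 = _
  simp only [sq, sum_mul_sum, dotProduct_add, AddChar.map_add_eq_mul]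

lemma sum_sq_fou_cmpnt {n m : ℕ} (F : BV n → BV m) :
    ∑ l : BV m, fou (cmpnt F l) ^ 2 = 2 ^ m * #(collisions F) := by
  calc ∑ l : BV m, fou (cmpnt F l) ^ 2
      = ∑ x, ∑ y, ∑ l : BV m, signChar (l ⬝ᵥ (F x + F y)) := by
        simp only [sq_fou_cmpnt]
        rw [sum_comm]
        exact sum_congr rfl fun x _ => sum_comm
    _ = ∑ p : BV n × BV n, if F p.1 = F p.2 then 2 ^ m else 0 := by
        simp only [sum_signChar_dotProduct, Fintype.card_fin, funext_iff, Pi.add_apply,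
          Pi.zero_apply, CharTwo.add_eq_zero]
        exact (Fintype.sum_prod_type' _).symm
    _ = 2 ^ m * #(collisions F) := by
        rw [sum_ite, sum_const_zero, add_zero, sum_const, nsmul_eq_mul, mul_comm]
        rfl

lemma le_of_injective_bv {n m : ℕ} {F : BV n → BV m} (hF : Function.Injective F) : n ≤ m := by
  have hcard : 2 ^ n ≤ 2 ^ m := by simpa using Fintype.card_le_of_injective F hF
  exact (Nat.pow_le_pow_iff_right (by norm_num)).mp hcard

/-- Σ_{λ ∈ 𝔽₂^m} 𝔉(F_λ)² ≥ 2^(n+m), with equality iff m ≥ n and F is an embedding. -/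
theorem square_fourier_vectorial (n m : ℕ) (F : BV n → BV m) :
    (2 : ℤ) ^ (n + m) ≤ ∑ l : BV m, (fou (cmpnt F l)) ^ 2
    ∧ ((∑ l : BV m, (fou (cmpnt F l)) ^ 2 = (2 : ℤ) ^ (n + m))
        ↔ (n ≤ m ∧ Function.Injective F)) := by
  have hcard : (2 : ℤ) ^ n = Fintype.card (BV n) := by simp
  rw [sum_sq_fou_cmpnt, pow_add, mul_comm, hcard,
    mul_right_inj' (pow_ne_zero m two_ne_zero), Nat.cast_inj, card_collisions_eq_iff_injective]
  refine ⟨by gcongr; exact card_le_card_collisions F, ?_⟩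
  exact ⟨fun hF => ⟨le_of_injective_bv hF, hF⟩, And.right⟩
end

section
/- Let F : 𝔽₂ⁿ → 𝔽₂^m be a vectorial Boolean function. Then Σ_{λ ∈ 𝔽₂^m} Σ_{a ∈ 𝔽₂ⁿ} 𝔉(D_a F_λ) ≥ 2^{n+m}, and equality holds if and only if m ≥ n and F is an embedding (i.e., injective). -/
/-! Since `Σ_a 𝔉(D_a f) = 𝔉(f)²`, orthogonality of the characters `λ ↦ (-1)^(λ · v)` turns the
sum into `2^m` times the number of collisions `F x = F y`. The diagonal gives `2^n` of them, and
there are no others exactly when `F` is injective, which in turn forces `2^n ≤ 2^m`. -/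

open Finset

lemma neg_one_pow_val_add (a b : ZMod 2) :
    (-1 : ℤ) ^ (a + b).val = (-1) ^ a.val * (-1) ^ b.val := by
  decide +revert

lemma neg_one_pow_val_sum {ι : Type*} (s : Finset ι) (f : ι → ZMod 2) :
    (-1 : ℤ) ^ (∑ i ∈ s, f i).val = ∏ i ∈ s, (-1) ^ (f i).val := by
  classical
  induction s using Finset.induction_on with
  | empty => simp
  | insert j s hj ih => rw [sum_insert hj, prod_insert hj, neg_one_pow_val_add, ih]

lemma sum_neg_one_pow_val_mul (w : ZMod 2) :
    ∑ c : ZMod 2, (-1 : ℤ) ^ (c * w).val = if w = 0 then 2 else 0 := by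
  decide +revert

lemma sum_neg_one_pow_val_dotProduct {ι : Type*} [Fintype ι] [DecidableEq ι]
    (v : ι → ZMod 2) :
    ∑ l : ι → ZMod 2, (-1 : ℤ) ^ (l ⬝ᵥ v).val = if v = 0 then 2 ^ Fintype.card ι else 0 := by
  simp only [dotProduct, neg_one_pow_val_sum]
  rw [← Fintype.prod_sum fun i c => (-1 : ℤ) ^ (c * v i).val]
  simp only [sum_neg_one_pow_val_mul, Fintype.prod_ite_zero, prod_const, card_univ, funext_iff,
    Pi.zero_apply]

lemma sum_fou_bderiv {n : ℕ} (f : BV n → ZMod 2) : ∑ a, fou (bderiv f a) = fou f ^ 2 := by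
  calc ∑ a, fou (bderiv f a)
      = ∑ x, ∑ a, (-1 : ℤ) ^ (f (x + a)).val * (-1) ^ (f x).val := by
        simp only [fou, bderiv, neg_one_pow_val_add]
        exact sum_comm
    _ = ∑ x, ∑ y, (-1 : ℤ) ^ (f y).val * (-1) ^ (f x).val := by
        refine sum_congr rfl fun x _ => ?_
        exact Equiv.sum_comp (Equiv.addLeft x) fun y => (-1 : ℤ) ^ (f y).val * (-1) ^ (f x).val
    _ = fou f ^ 2 := by
        rw [sq, fou, sum_mul_sum, sum_comm]

lemma cmpnt_apply {n m : ℕ} (F : BV n → BV m) (l : BV m) (x : BV n) :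
    cmpnt F l x = l ⬝ᵥ F x := rfl

lemma sum_fou_cmpnt_sq {n m : ℕ} (F : BV n → BV m) :
    ∑ l, fou (cmpnt F l) ^ 2 = 2 ^ m * #{p : BV n × BV n | F p.1 = F p.2} := by
  have hcoll : ∀ x y, F x + F y = 0 ↔ F x = F y := fun x y => by
    simp only [funext_iff, Pi.add_apply, Pi.zero_apply, CharTwo.add_eq_zero]
  calc ∑ l, fou (cmpnt F l) ^ 2
      = ∑ l, ∑ x, ∑ y, (-1 : ℤ) ^ (l ⬝ᵥ (F x + F y)).val := by
        simp only [sq, fou, sum_mul_sum, cmpnt_apply, dotProduct_add, neg_one_pow_val_add]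
    _ = ∑ x, ∑ y, ∑ l, (-1 : ℤ) ^ (l ⬝ᵥ (F x + F y)).val := by
        rw [sum_comm]
        simp only [sum_comm (γ := BV m)]
    _ = ∑ x, ∑ y, if F x = F y then 2 ^ m else 0 := by
        simp only [sum_neg_one_pow_val_dotProduct, hcoll, Fintype.card_fin]
    _ = 2 ^ m * #{p : BV n × BV n | F p.1 = F p.2} := by
        rw [card_filter, Fintype.sum_prod_type]
        push_cast
        simp only [mul_sum, mul_ite, mul_one, mul_zero]

lemma diag_subset_filter_eq {α β : Type*} [Fintype α] [DecidableEq α] [DecidableEq β]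
    (f : α → β) : (univ : Finset α).diag ⊆ ({p : α × α | f p.1 = f p.2} : Finset _) :=
  fun p hp => by simp_all [mem_diag]

lemma card_le_card_filter_eq {α β : Type*} [Fintype α] [DecidableEq β] (f : α → β) :
    Fintype.card α ≤ #{p : α × α | f p.1 = f p.2} := by
  classical
  simpa using card_le_card (diag_subset_filter_eq f)

lemma card_filter_eq_eq_card_iff {α β : Type*} [Fintype α] [DecidableEq β] (f : α → β) :
    #{p : α × α | f p.1 = f p.2} = Fintype.card α ↔ Function.Injective f := by
  classical
  have hdiag : #(univ : Finset α).diag = Fintype.card α := by simp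
  constructor
  · intro h x y hxy
    have hfilter := eq_of_subset_of_card_le (diag_subset_filter_eq f) (h.trans hdiag.symm).le
    have : (x, y) ∈ ({p : α × α | f p.1 = f p.2} : Finset _) := by simp [hxy]
    exact (mem_diag.1 (hfilter ▸ this)).2
  · intro hf
    rw [← hdiag]
    congr 1
    ext p
    simp [mem_diag, hf.eq_iff]

lemma le_of_injective_fin_pi {R : Type*} [Fintype R] [Nontrivial R] {n m : ℕ}
    {F : (Fin n → R) → Fin m → R} (hF : Function.Injective F) : n ≤ m := by
  have hcard := Fintype.card_le_of_injective F hF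
  simp only [Fintype.card_pi, prod_const, card_univ, Fintype.card_fin] at hcard
  exact (Nat.pow_le_pow_iff_right Fintype.one_lt_card).1 hcard

/-- Σ_{λ ∈ 𝔽₂^m} Σ_{a ∈ 𝔽₂ⁿ} 𝔉(D_a F_λ) ≥ 2^(n+m),
    with equality iff m ≥ n and F is an embedding. -/
theorem fourier_derivatives_vectorial (n m : ℕ) (F : BV n → BV m) :
    (2 : ℤ) ^ (n + m) ≤ ∑ l : BV m, ∑ a : BV n, fou (bderiv (cmpnt F l) a)
    ∧ ((∑ l : BV m, ∑ a : BV n, fou (bderiv (cmpnt F l) a) = (2 : ℤ) ^ (n + m))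
        ↔ (n ≤ m ∧ Function.Injective F)) := by
  have hcard : (Fintype.card (BV n) : ℤ) = 2 ^ n := by simp
  simp only [sum_fou_bderiv, sum_fou_cmpnt_sq, pow_add, mul_comm ((2 : ℤ) ^ n)]
  refine ⟨?_, ?_⟩
  · gcongr
    rw [← hcard]
    exact_mod_cast card_le_card_filter_eq F
  · rw [mul_right_inj' (by positivity), ← hcard, Nat.cast_inj,
      card_filter_eq_eq_card_iff]
    exact ⟨fun hF => ⟨le_of_injective_fin_pi hF, hF⟩, And.right⟩
end
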